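/- The multiplication matrices commute in the sense R^-_{k,m+1} R^+_{k,m} = R^+_{k,m-1} R^-_{k,m}, with entries R^+_{n',n} = √((n+m+1)(n+k+m+1)/((2n+k+m+1)(2n+k+m+2))) δ_{n',n} + √(n(n+k)/((2n+k+m)(2n+k+m+1))) δ_{n',n-1} and R^-_{n',n} = √((n+1)(n+k+1)/((2n+k+m+1)(2n+k+m+2))) δ_{n',n+1} + √((n+m)(n+k+m)/((2n+k+m)(2n+k+m+1))) δ_{n',n}, with parameters (k,m) adjusted as subscripted. -/
import Mathlib


/-- Entries of the raising derivative matrix `D⁺_{k,m}`: `√(2n(n+k+m+1)) δ_{n',n-1}`. -/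
noncomputable def Dplus (k m : ℕ) (n' n : ℕ) : ℝ :=
  if n' + 1 = n then Real.sqrt (2 * (n : ℝ) * (n + k + m + 1)) else 0

/-- Entries of the lowering derivative matrix `D⁻_{k,m}`: `√(2(n+k+1)(n+m)) δ_{n',n}`. -/
noncomputable def Dminus (k m : ℕ) (n' n : ℕ) : ℝ :=
  if n' = n then Real.sqrt (2 * ((n : ℝ) + k + 1) * (n + m)) else 0

/-- Entries of the multiplication matrix `R⁺_{k,m}`. -/
noncomputable def Rplus (k m : ℕ) (n' n : ℕ) : ℝ :=
  (if n' = n then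
    Real.sqrt (((n : ℝ) + m + 1) * (n + k + m + 1) /
      ((2 * (n : ℝ) + k + m + 1) * (2 * n + k + m + 2))) else 0) +
  (if n' + 1 = n then
    Real.sqrt ((n : ℝ) * (n + k) / ((2 * (n : ℝ) + k + m) * (2 * n + k + m + 1))) else 0)

/-- Entries of the multiplication matrix `R⁻_{k,m}`. -/
noncomputable def Rminus (k m : ℕ) (n' n : ℕ) : ℝ :=
  (if n' = n + 1 then
    Real.sqrt (((n : ℝ) + 1) * (n + k + 1) /
      ((2 * (n : ℝ) + k + m + 1) * (2 * n + k + m + 2))) else 0) +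
  (if n' = n then
    Real.sqrt (((n : ℝ) + m) * (n + k + m) /
      ((2 * (n : ℝ) + k + m) * (2 * n + k + m + 1))) else 0)

/-- Entries of the conversion matrix `C_{k,m}`. -/
noncomputable def Cmat (k m : ℕ) (n' n : ℕ) : ℝ :=
  (if n' = n then
    Real.sqrt (((n : ℝ) + k + 1) * (n + k + m + 1) /
      ((2 * (n : ℝ) + k + m + 1) * (2 * n + k + m + 2))) else 0) -
  (if n' + 1 = n then
    Real.sqrt ((n : ℝ) * (n + m) / ((2 * (n : ℝ) + k + m) * (2 * n + k + m + 1))) else 0)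

lemma Rplus_zero {k m n' n : ℕ} (h1 : n' ≠ n) (h2 : n' + 1 ≠ n) : Rplus k m n' n = 0 := by
  simp [Rplus, h1, h2]

lemma Rminus_zero {k m n' n : ℕ} (h1 : n' ≠ n + 1) (h2 : n' ≠ n) : Rminus k m n' n = 0 := by
  simp [Rminus, h1, h2]

lemma Rplus_diag (k m n : ℕ) : Rplus k m n n =
    Real.sqrt (((n : ℝ) + m + 1) * ((n : ℝ) + k + m + 1) /
      ((2 * (n : ℝ) + k + m + 1) * (2 * (n : ℝ) + k + m + 2))) := by
  rw [Rplus, if_pos rfl, if_neg (by omega), add_zero]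

lemma Rplus_sub (k m n : ℕ) : Rplus k m n (n + 1) =
    Real.sqrt (((n : ℝ) + 1) * ((n : ℝ) + 1 + k) /
      ((2 * ((n : ℝ) + 1) + k + m) * (2 * ((n : ℝ) + 1) + k + m + 1))) := by
  rw [Rplus, if_neg (by omega), if_pos rfl, zero_add]
  congr 1
  push_cast
  ring

lemma Rminus_super (k m n : ℕ) : Rminus k m (n + 1) n =
    Real.sqrt (((n : ℝ) + 1) * ((n : ℝ) + k + 1) /
      ((2 * (n : ℝ) + k + m + 1) * (2 * (n : ℝ) + k + m + 2))) := by
  rw [Rminus, if_pos rfl, if_neg (by omega), add_zero]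

lemma Rminus_diag (k m n : ℕ) : Rminus k m n n =
    Real.sqrt (((n : ℝ) + m) * ((n : ℝ) + k + m) /
      ((2 * (n : ℝ) + k + m) * (2 * (n : ℝ) + k + m + 1))) := by
  rw [Rminus, if_neg (by omega), if_pos rfl, zero_add]

lemma key2 {A B C D : ℝ} (hA : 0 ≤ A) (hC : 0 ≤ C) (h : A * B = C * D) :
    Real.sqrt A * Real.sqrt B = Real.sqrt C * Real.sqrt D := by
  rw [← Real.sqrt_mul hA, ← Real.sqrt_mul hC, h]

lemma key4 {A B C D E F G H : ℝ} (hA : 0 ≤ A) (hC : 0 ≤ C) (hE : 0 ≤ E) (hG : 0 ≤ G)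
    (hB : B = A) (hD : D = C) (hF : F = E) (hH : H = G) (hX : A + C = E + G) :
    Real.sqrt A * Real.sqrt B + Real.sqrt C * Real.sqrt D =
      Real.sqrt E * Real.sqrt F + Real.sqrt G * Real.sqrt H := by
  subst hB hD hF hH
  rw [Real.mul_self_sqrt hA, Real.mul_self_sqrt hC, Real.mul_self_sqrt hE,
    Real.mul_self_sqrt hG]
  exact hX

lemma key3 {A B E F G H : ℝ} (hA : 0 ≤ A) (hE : 0 ≤ E) (hG : 0 ≤ G)
    (hB : B = A) (hF : F = E) (hH : H = G) (hX : A = E + G) :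
    Real.sqrt A * Real.sqrt B = Real.sqrt E * Real.sqrt F + Real.sqrt G * Real.sqrt H := by
  subst hB hF hH
  rw [Real.mul_self_sqrt hA, Real.mul_self_sqrt hE, Real.mul_self_sqrt hG]
  exact hX

theorem mult_matrices_commute (k m : ℕ) (hm : 1 ≤ m) (n' n : ℕ) :
    (∑' j : ℕ, Rminus k (m + 1) n' j * Rplus k m j n) =
      ∑' j : ℕ, Rplus k (m - 1) n' j * Rminus k m j n := by
  obtain ⟨p, rfl⟩ : ∃ p, m = p + 1 := ⟨m - 1, (Nat.succ_pred_eq_of_pos hm).symm⟩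
  simp only [Nat.add_sub_cancel]
  by_cases h1 : n' = n + 1
  · subst h1
    rw [tsum_eq_single n (fun j hj => by
          by_cases hx : j + 1 = n
          · rw [Rminus_zero (by omega) (by omega), zero_mul]
          · rw [Rplus_zero (by omega) (by omega), mul_zero]),
        tsum_eq_single (n + 1) (fun j hj => by
          by_cases hx : j = n
          · rw [Rplus_zero (by omega) (by omega), zero_mul]
          · rw [Rminus_zero (by omega) (by omega), mul_zero])]
    rw [Rminus_super, Rplus_diag, Rplus_diag, Rminus_super]
    apply key2
    · positivity
    · positivity
    · push_cast; ring
  · by_cases h2 : n' = n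
    · subst h2
      rcases n' with _ | q
      · rw [tsum_eq_single 0 (fun j hj => by
              rw [Rplus_zero (by omega) (by omega), mul_zero]),
            tsum_eq_sum (s := {0, 0 + 1}) (fun j hj => by
              simp at hj
              rw [Rminus_zero (by omega) (by omega), mul_zero]),
            Finset.sum_pair (by omega)]
        rw [Rminus_diag, Rplus_diag, Rplus_diag, Rminus_diag, Rplus_sub, Rminus_super]
        apply key3
        · positivity
        · positivity
        · positivity
        · push_cast; ring
        · push_cast; ring
        · push_cast; ring
        · have d1 : (0:ℝ) < (k:ℝ) + p + 1 := by positivity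
          have d2 : (0:ℝ) < (k:ℝ) + p + 2 := by positivity
          have d3 : (0:ℝ) < (k:ℝ) + p + 3 := by positivity
          push_cast
          field_simp
          ring
      · rw [tsum_eq_sum (s := {q, q + 1}) (fun j hj => by
              simp at hj
              rw [Rminus_zero (by omega) (by omega), zero_mul]),
            tsum_eq_sum (s := {q + 1, q + 1 + 1}) (fun j hj => by
              simp at hj
              rw [Rminus_zero (by omega) (by omega), mul_zero]),
            Finset.sum_pair (by omega), Finset.sum_pair (by omega)]
        rw [Rminus_super, Rplus_sub, Rminus_diag, Rplus_diag, Rplus_diag, Rminus_diag,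
          Rplus_sub, Rminus_super]
        apply key4
        · positivity
        · positivity
        · positivity
        · positivity
        · push_cast; ring
        · push_cast; ring
        · push_cast; ring
        · push_cast; ring
        · have d1 : (0:ℝ) < 2 * (q:ℝ) + k + p + 3 := by positivity
          have d2 : (0:ℝ) < 2 * (q:ℝ) + k + p + 4 := by positivity
          have d3 : (0:ℝ) < 2 * (q:ℝ) + k + p + 5 := by positivity
          push_cast
          field_simp
          ring
    · by_cases h3 : n' + 1 = n
      · have hn : n = n' + 1 := by omega
        subst hn
        rw [tsum_eq_single n' (fun j hj => by
              by_cases hx : j = n' + 1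
              · rw [Rminus_zero (by omega) (by omega), zero_mul]
              · rw [Rplus_zero (by omega) (by omega), mul_zero]),
            tsum_eq_single (n' + 1) (fun j hj => by
              by_cases hx : j = n' + 1 + 1
              · rw [Rplus_zero (by omega) (by omega), zero_mul]
              · rw [Rminus_zero (by omega) (by omega), mul_zero])]
        rw [Rminus_diag, Rplus_sub, Rplus_sub, Rminus_diag]
        apply key2
        · positivity
        · positivity
        · push_cast; ring
      · have hL : ∀ j, Rminus k (p + 1 + 1) n' j * Rplus k (p + 1) j n = 0 := fun j => by
          by_cases hx : j = n ∨ j + 1 = n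
          · rw [Rminus_zero (by omega) (by omega), zero_mul]
          · rw [Rplus_zero (by omega) (by omega), mul_zero]
        have hR : ∀ j, Rplus k p n' j * Rminus k (p + 1) j n = 0 := fun j => by
          by_cases hx : j = n ∨ j = n + 1
          · rw [Rplus_zero (by omega) (by omega), zero_mul]
          · rw [Rminus_zero (by omega) (by omega), mul_zero]
        rw [tsum_eq_single 0 (fun j _ => hL j), tsum_eq_single 0 (fun j _ => hR j), hL 0, hR 0]
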